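/- There exists an element α ∈ O_∞ that is not 1-approximable, i.e., no sequence of 1-approximations of α converges to α. (This is the case A = F_q[t], where N = 0, of the first assertion of Theorem 1.3 of the paper: O_∞ is not contained in Ψ_{N+1}.) -/

import Mathlib

open FunctionField Filter Polynomial MeasureTheory
open scoped Multiplicative

variable (Fq : Type) [Field Fq] [Fintype Fq] [DecidableEq (RatFunc Fq)]

/-- The real absolute value attached to a `ℤₘ₀`-valued valuation with base `q`:
`Multiplicative.ofAdd n ↦ q ^ n` and `0 ↦ 0`. -/
noncomputable def zabs (q : ℕ) (x : WithZero (Multiplicative ℤ)) : ℝ :=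
  if hx : x = 0 then 0 else (q : ℝ) ^ Multiplicative.toAdd (WithZero.unzero hx)

/-- The absolute value `|h| = q ^ (-ν_∞ h)` on `K_∞ = F_q((1/t))`. -/
noncomputable def absInfty (q : ℕ) (h : RatFunc.CompletionAtInfty Fq) : ℝ :=
  zabs q (Valued.v h)

/-- The embedding of the polynomial ring `F_q[t]` into `K_∞ = F_q((1/t))`. -/
noncomputable def polyToInfty (p : Polynomial Fq) : RatFunc.CompletionAtInfty Fq :=
  letI := RatFunc.inftyValued Fq
  UniformSpace.Completion.coe' (α := RatFunc Fq) (algebraMap (Polynomial Fq) (RatFunc Fq) p)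

/-- The valuation ring `O_∞ = {α ∈ K_∞ : |α| ≤ 1}`. -/
def Oinfty (q : ℕ) : Set (RatFunc.CompletionAtInfty Fq) := {α | absInfty Fq q α ≤ 1}

noncomputable instance : MeasurableSpace (RatFunc.CompletionAtInfty Fq) := borel _

instance : BorelSpace (RatFunc.CompletionAtInfty Fq) := ⟨rfl⟩

/-- A Haar measure on `K_∞`: a Borel measure invariant under all additive translations,
positive and finite on `O_∞`. -/
def IsHaar (q : ℕ) (μ : Measure (RatFunc.CompletionAtInfty Fq)) : Prop :=
  (∀ x : RatFunc.CompletionAtInfty Fq, μ.map (fun y => y + x) = μ) ∧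
    0 < μ (Oinfty Fq q) ∧ μ (Oinfty Fq q) < ⊤

/-- `f/g` is an `M`-approximation of `α`: `f` and `g` are coprime, `g ≠ 0`, and
`|α - f/g| < q^(-M) / |g|²`. -/
def IsApprox (q : ℕ) (M : ℤ) (α : RatFunc.CompletionAtInfty Fq) (f g : Polynomial Fq) : Prop :=
  g ≠ 0 ∧ IsCoprime f g ∧
    absInfty Fq q (α - polyToInfty Fq f / polyToInfty Fq g) <
      (q : ℝ) ^ (-M) / absInfty Fq q (polyToInfty Fq g) ^ 2

/-!
The continued fraction `α = [0; t, t, t, …]`, the limit of its convergents, is the root of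
`α (t + α) = 1` with `|α| ≤ 1`. For coprime `f, g` the polynomial
`f² + t f g - g² = -(g α - f)(f + t g + g α)` is nonzero, so its absolute value is at least `1`.
But `|α - f/g| < q⁻¹ / |g|²` gives `|g α - f| < (q |g|)⁻¹`, while `|f + t g + g α| ≤ q |g|`,
so that absolute value would be less than `1`: `α` has no `1`-approximations at all.
-/

open Topology WithZero

namespace Valued

variable {R Γ₀ : Type*} [Ring R] [LinearOrderedCommGroupWithZero Γ₀] [Valued R Γ₀]

instance nonarchimedeanRing : NonarchimedeanRing R :=
  (toUniformSpace_eq R Γ₀).symm ▸ v.subgroups_basis.nonarchimedean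

theorem tendsto_zero_of_v_le {ι : Type*} {l : Filter ι} {f g : ι → R} (hg : Tendsto g l (𝓝 0))
    (hfg : ∀ᶠ n in l, v (f n) ≤ v (g n)) : Tendsto f l (𝓝 0) := by
  rw [(hasBasis_nhds_zero R Γ₀).tendsto_right_iff] at hg ⊢
  intro γ _
  filter_upwards [hg γ trivial, hfg] with n hgn hfgn
  simp only [Valuation.restrict_lt_iff_lt_embedding] at hgn ⊢
  exact hfgn.trans_lt hgn

theorem cauchySeq_of_v_sub_le_pow [MulArchimedean Γ₀] {a : ℕ → R} {r : R} (hr : v r < 1)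
    (h : ∀ n, v (a (n + 1) - a n) ≤ v r ^ n) : CauchySeq a :=
  NonarchimedeanAddGroup.cauchySeq_of_tendsto_sub_nhds_zero <|
    tendsto_zero_of_v_le (tendsto_zero_pow_of_v_lt_one hr) (.of_forall fun n => by
      rw [map_pow]; exact h n)

end Valued

section PeriodicContinuedFraction

variable {K Γ₀ : Type*} [Field K] [LinearOrderedCommGroupWithZero Γ₀] [Valued K Γ₀] {s : K}

/-- The convergents of the continued fraction `[0; s, s, s, …]`. -/
def periodicConvergent (s : K) : ℕ → K
  | 0 => 0
  | n + 1 => (s + periodicConvergent s n)⁻¹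

theorem v_periodicConvergent_le_one (hs : 1 < Valued.v s) :
    ∀ n, Valued.v (periodicConvergent s n) ≤ 1
  | 0 => by simp [periodicConvergent]
  | n + 1 => by
    rw [periodicConvergent, map_inv₀, Valuation.map_add_eq_of_lt_left _
      ((v_periodicConvergent_le_one hs n).trans_lt hs)]
    exact inv_le_one_of_one_le₀ hs.le

theorem v_add_periodicConvergent (hs : 1 < Valued.v s) (n : ℕ) :
    Valued.v (s + periodicConvergent s n) = Valued.v s :=
  Valuation.map_add_eq_of_lt_left _ ((v_periodicConvergent_le_one hs n).trans_lt hs)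

theorem add_periodicConvergent_ne_zero (hs : 1 < Valued.v s) (n : ℕ) :
    s + periodicConvergent s n ≠ 0 := by
  rw [← Valuation.ne_zero_iff Valued.v, v_add_periodicConvergent hs]
  exact (zero_lt_one.trans hs).ne'

theorem v_periodicConvergent_succ_sub_le (hs : 1 < Valued.v s) :
    ∀ n, Valued.v (periodicConvergent s (n + 1) - periodicConvergent s n) ≤ Valued.v s⁻¹ ^ n
  | 0 => by simp [periodicConvergent, inv_le_one_of_one_le₀ hs.le]
  | n + 1 => by
    have hs' : Valued.v s⁻¹ ≤ 1 := by rw [map_inv₀]; exact inv_le_one_of_one_le₀ hs.le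
    have key : periodicConvergent s (n + 2) - periodicConvergent s (n + 1) =
        -(periodicConvergent s (n + 1) - periodicConvergent s n) *
          (s + periodicConvergent s (n + 1))⁻¹ * (s + periodicConvergent s n)⁻¹ := by
      change (s + periodicConvergent s (n + 1))⁻¹ - (s + periodicConvergent s n)⁻¹ = _
      rw [inv_sub_inv (add_periodicConvergent_ne_zero hs _) (add_periodicConvergent_ne_zero hs _),
        div_eq_mul_inv, mul_inv]
      ring
    calc _ = Valued.v (periodicConvergent s (n + 1) - periodicConvergent s n) *
          (Valued.v s⁻¹ * Valued.v s⁻¹) := by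
          rw [key, map_mul, map_mul, Valuation.map_neg, map_inv₀, map_inv₀, map_inv₀,
            v_add_periodicConvergent hs, v_add_periodicConvergent hs, mul_assoc]
      _ ≤ Valued.v s⁻¹ ^ n * (Valued.v s⁻¹ * 1) :=
          mul_le_mul' (v_periodicConvergent_succ_sub_le hs n) (mul_le_mul_right hs' _)
      _ = Valued.v s⁻¹ ^ (n + 1) := by rw [mul_one, pow_succ]

theorem exists_mul_add_eq_one [MulArchimedean Γ₀] [CompleteSpace K] (hs : 1 < Valued.v s) :
    ∃ α : K, α * (s + α) = 1 ∧ Valued.v α ≤ 1 := by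
  have hr : Valued.v s⁻¹ < 1 := by rw [map_inv₀]; exact inv_lt_one_of_one_lt₀ hs
  obtain ⟨α, hα⟩ := cauchySeq_tendsto_of_complete
    (Valued.cauchySeq_of_v_sub_le_pow hr (v_periodicConvergent_succ_sub_le hs))
  refine ⟨α, tendsto_nhds_unique (f := fun n => periodicConvergent s (n + 1) *
    (s + periodicConvergent s n)) ((hα.comp (tendsto_add_atTop_nat 1)).mul
      (tendsto_const_nhds.add hα)) ?_, ?_⟩
  · simp only [periodicConvergent, inv_mul_cancel₀ (add_periodicConvergent_ne_zero hs _)]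
    exact tendsto_const_nhds
  · exact (Valued.isClosed_integer K).mem_of_tendsto hα
      (.of_forall (v_periodicConvergent_le_one hs))

end PeriodicContinuedFraction

theorem Valuation.map_sq_add_mul_mul_sub_sq_lt_one {K Γ₀ : Type*} [CommRing K]
    [LinearOrderedCommGroupWithZero Γ₀] (v : Valuation K Γ₀) {s α F G : K}
    (hα : α * (s + α) = 1) (hαv : v α ≤ 1) (hs : 1 ≤ v s) (hG : 1 ≤ v G)
    (happrox : v (G * α - F) < (v s * v G)⁻¹) : v (F ^ 2 + s * F * G - G ^ 2) < 1 := by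
  have hsG : 1 ≤ v s * v G := Right.one_le_mul hs hG
  have hGα : v (G * α) ≤ v s * v G := by
    rw [map_mul]
    calc v G * v α ≤ v G * 1 := by gcongr
      _ ≤ v s * v G := by rw [mul_one]; exact le_mul_of_one_le_left' hs
  have hF : v F ≤ v s * v G := by
    rw [← sub_sub_cancel (G * α) F]
    refine (v.map_sub _ _).trans (max_le hGα (happrox.le.trans ?_))
    exact (inv_le_one_of_one_le₀ hsG).trans hsG
  have hcofactor : v (F + s * G + G * α) ≤ v s * v G :=
    v.map_add_le (v.map_add_le hF (by rw [map_mul])) hGα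
  have hfactor : F ^ 2 + s * F * G - G ^ 2 = -(G * α - F) * (F + s * G + G * α) := by
    linear_combination G ^ 2 * hα
  rw [hfactor, map_mul, Valuation.map_neg]
  calc v (G * α - F) * v (F + s * G + G * α) < (v s * v G)⁻¹ * (v s * v G) :=
        mul_lt_mul_of_lt_of_le_of_nonneg_of_pos happrox hcofactor zero_le (zero_lt_one.trans_le hsG)
    _ = 1 := inv_mul_cancel₀ (zero_lt_one.trans_le hsG).ne'

theorem Polynomial.sq_add_X_mul_mul_sub_sq_ne_zero {R : Type*} [CommRing R] [IsDomain R]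
    {f g : R[X]} (hfg : IsCoprime f g) : f ^ 2 + X * f * g - g ^ 2 ≠ 0 := by
  intro h
  have hf : IsUnit f := (hfg.mul_right hfg).isUnit_of_dvd' dvd_rfl
    ⟨f + X * g, by linear_combination -h⟩
  have hg : IsUnit g := (hfg.symm.mul_right hfg.symm).isUnit_of_dvd' dvd_rfl
    ⟨g - X * f, by linear_combination h⟩
  obtain ⟨a, ha, rfl⟩ := Polynomial.isUnit_iff.mp hf
  obtain ⟨b, hb, rfl⟩ := Polynomial.isUnit_iff.mp hg
  have hcoeff := congrArg (coeff · 1) h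
  simp only [coeff_sub, coeff_add, ← C_pow, coeff_C, coeff_mul_C, coeff_X_one, one_ne_zero,
    if_false, one_mul, sub_zero, zero_add] at hcoeff
  exact mul_ne_zero ha.ne_zero hb.ne_zero hcoeff

theorem zabs_eq_toNNReal {q : ℕ} (hq : (q : NNReal) ≠ 0) (x : ℤᵐ⁰) :
    zabs q x = WithZeroMulInt.toNNReal hq x := by
  by_cases hx : x = 0
  · simp [zabs, hx]
  · rw [zabs, dif_neg hx, WithZeroMulInt.toNNReal_neg_apply hq hx]
    simp

theorem zabs_strictMono {q : ℕ} (hq : 1 < q) : StrictMono (zabs q) := by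
  have hq' : 1 < (q : NNReal) := by exact_mod_cast hq
  intro x y hxy
  rw [zabs_eq_toNNReal hq'.ne_bot, zabs_eq_toNNReal hq'.ne_bot, NNReal.coe_lt_coe]
  exact WithZeroMulInt.toNNReal_strictMono hq' hxy

theorem zabs_exp (q : ℕ) (m : ℤ) : zabs q (exp m) = (q : ℝ) ^ m := by
  rw [zabs, dif_neg exp_ne_zero]
  rfl

section CompletionAtInfty

variable {k : Type} [Field k] [DecidableEq (RatFunc k)]

instance : CompleteSpace (RatFunc.CompletionAtInfty k) :=
  @UniformSpace.Completion.completeSpace (RatFunc k) (RatFunc.inftyValued k).toUniformSpace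

theorem polyToInfty_eq (p : k[X]) : polyToInfty k p =
    algebraMap (RatFunc k) (RatFunc.CompletionAtInfty k) (algebraMap k[X] (RatFunc k) p) :=
  rfl

theorem polyToInfty_sq_add_X_mul_mul_sub_sq (f g : k[X]) :
    polyToInfty k (f ^ 2 + X * f * g - g ^ 2) = polyToInfty k f ^ 2 +
      polyToInfty k X * polyToInfty k f * polyToInfty k g - polyToInfty k g ^ 2 := by
  simp only [polyToInfty_eq, map_add, map_sub, map_mul, map_pow]

theorem v_polyToInfty {p : k[X]} (hp : p ≠ 0) :
    Valued.v (polyToInfty k p) = exp (p.natDegree : ℤ) := by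
  rw [RatFunc.valuedCompletionAtInfty.def]
  exact (@Valued.extensionValuation_apply_coe (RatFunc k) _ _ _ (RatFunc.inftyValued k)
    _).trans (RatFunc.inftyValuation.polynomial k hp)

theorem one_le_v_polyToInfty {p : k[X]} (hp : p ≠ 0) : 1 ≤ Valued.v (polyToInfty k p) := by
  rw [v_polyToInfty hp, ← exp_zero, exp_le_exp]
  exact Nat.cast_nonneg _

theorem v_polyToInfty_X : Valued.v (polyToInfty k X) = exp 1 := by
  rw [v_polyToInfty X_ne_zero, natDegree_X, Nat.cast_one]

theorem mem_Oinfty_iff {q : ℕ} (hq : 1 < q) {α : RatFunc.CompletionAtInfty k} :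
    α ∈ Oinfty k q ↔ Valued.v α ≤ 1 := by
  rw [Oinfty, Set.mem_ofPred_eq, absInfty, ← exp_zero, ← (zabs_strictMono hq).le_iff_le,
    zabs_exp, zpow_zero]

theorem IsApprox.v_sub_div_lt {q : ℕ} (hq : 1 < q) {M : ℤ} {α : RatFunc.CompletionAtInfty k}
    {f g : k[X]} (h : IsApprox k q M α f g) :
    Valued.v (α - polyToInfty k f / polyToInfty k g) < exp (-M - 2 * g.natDegree) := by
  obtain ⟨hg, -, hlt⟩ := h
  have hq0 : (q : ℝ) ≠ 0 := by exact_mod_cast (zero_lt_one.trans hq).ne'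
  rw [absInfty, absInfty, v_polyToInfty hg, zabs_exp, ← zpow_natCast, ← zpow_mul,
    ← zpow_sub₀ hq0, ← zabs_exp] at hlt
  refine (zabs_strictMono hq).lt_iff_lt.mp (hlt.trans_eq ?_)
  congr 2
  push_cast
  ring

theorem not_isApprox_one {q : ℕ} (hq : 1 < q) {α : RatFunc.CompletionAtInfty k}
    (hα : α * (polyToInfty k X + α) = 1) (hαv : Valued.v α ≤ 1) (f g : k[X]) :
    ¬ IsApprox k q 1 α f g := by
  intro h
  have happrox := h.v_sub_div_lt hq
  obtain ⟨hg, hfg, -⟩ := h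
  have hG := v_polyToInfty hg
  have hGne : polyToInfty k g ≠ 0 := by
    rw [← Valuation.ne_zero_iff Valued.v, hG]
    exact exp_ne_zero
  refine (Valued.v.map_sq_add_mul_mul_sub_sq_lt_one (F := polyToInfty k f) hα hαv
    (one_le_v_polyToInfty X_ne_zero) (one_le_v_polyToInfty hg) ?_).not_ge ?_
  · rw [← mul_div_cancel₀ (polyToInfty k f) hGne, ← mul_sub, map_mul, v_polyToInfty_X, hG,
      ← exp_add, ← exp_neg]
    calc _ < exp (g.natDegree : ℤ) * exp (-1 - 2 * (g.natDegree : ℤ)) :=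
          mul_lt_mul_of_pos_left happrox exp_pos
      _ = exp (-(1 + (g.natDegree : ℤ))) := by rw [← exp_add]; congr 1; ring
  · rw [← polyToInfty_sq_add_X_mul_mul_sub_sq]
    exact one_le_v_polyToInfty (sq_add_X_mul_mul_sub_sq_ne_zero hfg)

end CompletionAtInfty

/-- first assertion of Theorem 1.3 for `A = F_q[t]`, where `N = 0`:
there is an element of `O_∞` that is not `1`-approximable. -/
theorem exists_not_one_approximable (q : ℕ) (hq : Fintype.card Fq = q) :
    ∃ α ∈ Oinfty Fq q,
      ¬ ∃ f g : ℕ → Polynomial Fq, (∀ n, IsApprox Fq q 1 α (f n) (g n)) ∧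
        Tendsto (fun n => polyToInfty Fq (f n) / polyToInfty Fq (g n)) atTop (nhds α) := by
  have hq1 : 1 < q := hq ▸ Fintype.one_lt_card
  obtain ⟨α, hα, hαv⟩ := exists_mul_add_eq_one (s := polyToInfty Fq X)
    (by rw [v_polyToInfty_X, ← exp_zero, exp_lt_exp]; exact zero_lt_one)
  exact ⟨α, (mem_Oinfty_iff hq1).mpr hαv,
    fun ⟨f, g, happrox, _⟩ => not_isApprox_one hq1 hα hαv (f 0) (g 0) (happrox 0)⟩
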